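/- Let G be an N×N matrix with entries in {0,1}, and let N' be an Nn×Nn block matrix whose (i,j)-th n×n block equals A^{ij} if G_{ij}=1 and the zero matrix otherwise. Then the operator 2-norm of N' satisfies ‖N'‖₂ ≤ √(‖G‖₁ · ‖G‖_∞) · max_{i,j} ‖A^{ij}‖₂, where ‖G‖₁ is the maximum absolute column sum and ‖G‖_∞ the maximum absolute row sum. -/

import Mathlib

noncomputable def opNorm {m n : Type*} [Fintype m] [Fintype n] [DecidableEq n]
    (M : Matrix m n ℝ) : ℝ :=
  ‖LinearMap.toContinuousLinearMap (Matrix.toEuclideanLin (𝕜 := ℝ) M)‖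

/-!
Write `x = (x_j)` blockwise. The `i`-th block of `N' x` is a sum of the `A^{ij} x_j` with `g_ij = 1`,
so its norm is at most `K * ∑ j, |g_ij| ‖x_j‖` with `K = max ‖A^{ij}‖₂`: the norm of a block matrix
is dominated by the norm of any scalar matrix bounding its block norms, here `K • |G|`. For that
matrix the Schur test applies: Cauchy–Schwarz with weights `|g_ij|` gives
`(∑ j, |g_ij| v_j)² ≤ (∑ j, |g_ij|) (∑ j, |g_ij| v_j²)`, and summing over `i` gives
`‖|G| v‖² ≤ ‖G‖_∞ ‖G‖₁ ‖v‖²`.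
-/

open Finset Matrix

section SchurTest

variable {m n : Type*} [Fintype m] [Fintype n]

lemma sq_sum_mul_le_sum_mul_sum_mul_sq (w v : n → ℝ) (hw : ∀ j, 0 ≤ w j) :
    (∑ j, w j * v j) ^ 2 ≤ (∑ j, w j) * ∑ j, w j * v j ^ 2 :=
  sum_sq_le_sum_mul_sum_of_sq_le_mul _ (fun j _ => hw j)
    (fun j _ => mul_nonneg (hw j) (sq_nonneg _)) fun j _ => le_of_eq (by ring)

theorem sum_sq_sum_mul_le (W : Matrix m n ℝ) (hW : ∀ i j, 0 ≤ W i j) {r c : ℝ} (hr₀ : 0 ≤ r)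
    (hr : ∀ i, ∑ j, W i j ≤ r) (hc : ∀ j, ∑ i, W i j ≤ c) (v : n → ℝ) :
    ∑ i, (∑ j, W i j * v j) ^ 2 ≤ r * c * ∑ j, v j ^ 2 :=
  calc ∑ i, (∑ j, W i j * v j) ^ 2 ≤ ∑ i, r * ∑ j, W i j * v j ^ 2 := by
        gcongr with i
        exact (sq_sum_mul_le_sum_mul_sum_mul_sq _ v (hW i)).trans <|
          mul_le_mul_of_nonneg_right (hr i)
            (sum_nonneg fun j _ => mul_nonneg (hW i j) (sq_nonneg _))
    _ = r * ∑ j, (∑ i, W i j) * v j ^ 2 := by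
        simp only [← mul_sum, sum_mul]
        rw [sum_comm]
    _ ≤ r * ∑ j, c * v j ^ 2 := by gcongr with j; exact hc j
    _ = r * c * ∑ j, v j ^ 2 := by rw [← mul_sum, mul_assoc]

end SchurTest

section OpNorm

variable {m n : Type*} [Fintype m] [Fintype n] [DecidableEq n]

lemma opNorm_nonneg (M : Matrix m n ℝ) : 0 ≤ opNorm M := norm_nonneg _

@[simp]
lemma opNorm_zero : opNorm (0 : Matrix m n ℝ) = 0 := by simp [opNorm]

lemma opNorm_smul (c : ℝ) (M : Matrix m n ℝ) : opNorm (c • M) = |c| * opNorm M := by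
  simp [opNorm, norm_smul]

lemma norm_toEuclideanLin_le (M : Matrix m n ℝ) (x : EuclideanSpace ℝ n) :
    ‖toEuclideanLin M x‖ ≤ opNorm M * ‖x‖ :=
  (LinearMap.toContinuousLinearMap (toEuclideanLin M)).le_opNorm x

lemma opNorm_le_of_norm_sq_le (M : Matrix m n ℝ) {C : ℝ} (hC : 0 ≤ C)
    (h : ∀ x, ‖toEuclideanLin M x‖ ^ 2 ≤ C ^ 2 * ‖x‖ ^ 2) : opNorm M ≤ C :=
  ContinuousLinearMap.opNorm_le_bound _ hC fun x => by
    rw [← pow_le_pow_iff_left₀ (norm_nonneg _) (by positivity) two_ne_zero, mul_pow]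
    exact h x

theorem opNorm_le_sqrt_maxColSum_mul_maxRowSum (W : Matrix m n ℝ) :
    opNorm W ≤ √((⨆ j, ∑ i, |W i j|) * (⨆ i, ∑ j, |W i j|)) := by
  set C := ⨆ j, ∑ i, |W i j|
  set R := ⨆ i, ∑ j, |W i j|
  have hR₀ : 0 ≤ R := Real.iSup_nonneg fun i => sum_nonneg fun j _ => abs_nonneg _
  have hC₀ : 0 ≤ C := Real.iSup_nonneg fun j => sum_nonneg fun i _ => abs_nonneg _
  refine opNorm_le_of_norm_sq_le W (Real.sqrt_nonneg _) fun x => ?_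
  calc ‖toEuclideanLin W x‖ ^ 2 = ∑ i, (∑ j, W i j * x j) ^ 2 := by
        simp [EuclideanSpace.real_norm_sq_eq, mulVec, dotProduct]
    _ ≤ ∑ i, (∑ j, |W i j| * |x j|) ^ 2 := by
        refine sum_le_sum fun i _ => ?_
        rw [← sq_abs]
        exact pow_le_pow_left₀ (abs_nonneg _)
          ((abs_sum_le_sum_abs _ _).trans_eq (by simp only [abs_mul])) 2
    _ ≤ R * C * ∑ j, |x j| ^ 2 :=
        sum_sq_sum_mul_le _ (fun i j => abs_nonneg _) hR₀
          (fun i => le_ciSup (f := fun i => ∑ j, |W i j|) (Set.finite_range _).bddAbove i)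
          (fun j => le_ciSup (f := fun j => ∑ i, |W i j|) (Set.finite_range _).bddAbove j) _
    _ = √(C * R) ^ 2 * ‖x‖ ^ 2 := by
        rw [Real.sq_sqrt (mul_nonneg hC₀ hR₀), EuclideanSpace.real_norm_sq_eq]
        simp only [sq_abs]
        ring

end OpNorm

section Block

variable {ι κ α β : Type*}

def blockVec (x : EuclideanSpace ℝ (ι × α)) (i : ι) : EuclideanSpace ℝ α :=
  WithLp.toLp 2 fun a => x (i, a)

lemma sum_norm_sq_blockVec [Fintype ι] [Fintype α] (x : EuclideanSpace ℝ (ι × α)) :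
    ∑ i, ‖blockVec x i‖ ^ 2 = ‖x‖ ^ 2 := by
  simp [EuclideanSpace.norm_sq_eq, blockVec, Fintype.sum_prod_type]

variable [Fintype κ] [Fintype β] [DecidableEq κ] [DecidableEq β]

lemma blockVec_toEuclideanLin (M : Matrix (ι × α) (κ × β) ℝ) (x : EuclideanSpace ℝ (κ × β))
    (i : ι) :
    blockVec (toEuclideanLin M x) i =
      ∑ j, toEuclideanLin ((comp ι κ α β ℝ).symm M i j) (blockVec x j) := by
  ext a
  simp [blockVec, mulVec, dotProduct, Fintype.sum_prod_type]

lemma norm_blockVec_toEuclideanLin_le [Fintype α] (M : Matrix (ι × α) (κ × β) ℝ)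
    (x : EuclideanSpace ℝ (κ × β)) (i : ι) :
    ‖blockVec (toEuclideanLin M x) i‖ ≤
      ∑ j, opNorm ((comp ι κ α β ℝ).symm M i j) * ‖blockVec x j‖ := by
  rw [blockVec_toEuclideanLin]
  exact (norm_sum_le _ _).trans (sum_le_sum fun j _ => norm_toEuclideanLin_le _ _)

theorem opNorm_le_opNorm_of_blockOpNorm_le [Fintype ι] [Fintype α]
    (M : Matrix (ι × α) (κ × β) ℝ) (W : Matrix ι κ ℝ)
    (hW : ∀ i j, opNorm ((comp ι κ α β ℝ).symm M i j) ≤ W i j) : opNorm M ≤ opNorm W := by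
  refine opNorm_le_of_norm_sq_le M (opNorm_nonneg W) fun x => ?_
  set v : EuclideanSpace ℝ κ := WithLp.toLp 2 fun j => ‖blockVec x j‖
  have hv : ‖v‖ ^ 2 = ‖x‖ ^ 2 := by
    rw [← sum_norm_sq_blockVec x, EuclideanSpace.real_norm_sq_eq]
  calc ‖toEuclideanLin M x‖ ^ 2 = ∑ i, ‖blockVec (toEuclideanLin M x) i‖ ^ 2 :=
        (sum_norm_sq_blockVec _).symm
    _ ≤ ∑ i, (∑ j, W i j * ‖blockVec x j‖) ^ 2 := by
        gcongr with i
        refine (norm_blockVec_toEuclideanLin_le M x i).trans ?_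
        gcongr with j
        exact hW i j
    _ = ‖toEuclideanLin W v‖ ^ 2 := by
        simp [EuclideanSpace.real_norm_sq_eq, mulVec, dotProduct, v]
    _ ≤ (opNorm W * ‖v‖) ^ 2 := by gcongr; exact norm_toEuclideanLin_le W v
    _ = opNorm W ^ 2 * ‖x‖ ^ 2 := by rw [mul_pow, hv]

end Block

theorem block_matrix_opNorm_bound_general (N n : ℕ)
    (G : Matrix (Fin N) (Fin N) ℝ)
    (A : Fin N → Fin N → Matrix (Fin n) (Fin n) ℝ)
    (N' : Matrix (Fin N × Fin n) (Fin N × Fin n) ℝ)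
    (hN' : ∀ i j a b, N' (i, a) (j, b) = if G i j = 1 then A i j a b else 0) :
    opNorm N' ≤
      Real.sqrt ((⨆ j, ∑ i, |G i j|) * (⨆ i, ∑ j, |G i j|)) *
        ⨆ i, ⨆ j, opNorm (A i j) := by
  set K := ⨆ i, ⨆ j, opNorm (A i j)
  have hK : ∀ i j, opNorm (A i j) ≤ K := fun i j =>
    (le_ciSup (f := fun j => opNorm (A i j)) (Set.finite_range _).bddAbove j).trans
      (le_ciSup (f := fun i => ⨆ j, opNorm (A i j)) (Set.finite_range _).bddAbove i)
  have hK₀ : 0 ≤ K := Real.iSup_nonneg fun i => Real.iSup_nonneg fun j => opNorm_nonneg _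
  have hblock : ∀ i j, opNorm ((comp _ _ _ _ ℝ).symm N' i j) ≤ (K • G.map abs) i j := by
    intro i j
    have hN'ij : (comp _ _ _ _ ℝ).symm N' i j = if G i j = 1 then A i j else 0 := by
      ext a b
      split_ifs <;> simp_all
    rw [hN'ij]
    split_ifs with h
    · simpa [h] using hK i j
    · simpa using mul_nonneg hK₀ (abs_nonneg (G i j))
  calc opNorm N' ≤ opNorm (K • G.map abs) := opNorm_le_opNorm_of_blockOpNorm_le N' _ hblock
    _ = K * opNorm (G.map abs) := by rw [opNorm_smul, abs_of_nonneg hK₀]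
    _ ≤ K * √((⨆ j, ∑ i, |G i j|) * (⨆ i, ∑ j, |G i j|)) := by
        gcongr
        simpa using opNorm_le_sqrt_maxColSum_mul_maxRowSum (G.map abs)
    _ = _ := mul_comm _ _

theorem block_matrix_opNorm_bound (N n : ℕ) (hN : 0 < N) (hn : 0 < n)
    (G : Matrix (Fin N) (Fin N) ℝ)
    (hG : ∀ i j, G i j = 0 ∨ G i j = 1)
    (A : Fin N → Fin N → Matrix (Fin n) (Fin n) ℝ)
    (N' : Matrix (Fin N × Fin n) (Fin N × Fin n) ℝ)
    (hN' : ∀ i j a b, N' (i, a) (j, b) = if G i j = 1 then A i j a b else 0) :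
    opNorm N' ≤
      Real.sqrt ((⨆ j, ∑ i, |G i j|) * (⨆ i, ∑ j, |G i j|)) *
        ⨆ i, ⨆ j, opNorm (A i j) :=
  block_matrix_opNorm_bound_general N n G A N' hN'
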